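/- arXiv:1111.6023 — 2 statements merged into one kernel-verified Lean document; each statement's English description precedes it below -/
import Mathlib

section
/- Let x be a nonzero real (or complex) number with x^10 + 11x^5 - 1 ≠ 0 and set A = x^{-5} - 11 - x^5. Then (A^2 + 250A + 3125)^3 / A^5 = -(x^20 - 228x^15 + 494x^10 + 228x^5 + 1)^3 / (x^5 (x^10 + 11x^5 - 1)^5), provided A ≠ 0. -/
theorem stmt_0 (x : ℝ) (hx : x ≠ 0) (h1 : x ^ 10 + 11 * x ^ 5 - 1 ≠ 0)
    (A : ℝ) (hA : A = 1 / x ^ 5 - 11 - x ^ 5) (hA0 : A ≠ 0) :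
    (A ^ 2 + 250 * A + 3125) ^ 3 / A ^ 5 =
      -((x ^ 20 - 228 * x ^ 15 + 494 * x ^ 10 + 228 * x ^ 5 + 1) ^ 3 /
        (x ^ 5 * (x ^ 10 + 11 * x ^ 5 - 1) ^ 5)) := by
  have hx5 : x ^ 5 ≠ 0 := pow_ne_zero _ hx
  have hA5 : A ^ 5 ≠ 0 := pow_ne_zero _ hA0
  have hd : x ^ 5 * (x ^ 10 + 11 * x ^ 5 - 1) ^ 5 ≠ 0 :=
    mul_ne_zero hx5 (pow_ne_zero _ h1)
  have hA' : A * x ^ 5 = -(x ^ 10 + 11 * x ^ 5 - 1) := by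
    rw [hA]; field_simp; ring
  have h25 : A ^ 5 * x ^ 25 = -(x ^ 10 + 11 * x ^ 5 - 1) ^ 5 := by
    rw [show A ^ 5 * x ^ 25 = (A * x ^ 5) ^ 5 by ring, hA']; ring
  have h2 : ((A ^ 2 + 250 * A + 3125) * x ^ 10) ^ 3 =
      ((x ^ 10 + 11 * x ^ 5 - 1) ^ 2 + 250 * -(x ^ 10 + 11 * x ^ 5 - 1) * x ^ 5
        + 3125 * x ^ 10) ^ 3 := by
    rw [show (A ^ 2 + 250 * A + 3125) * x ^ 10
        = (A * x ^ 5) ^ 2 + 250 * (A * x ^ 5) * x ^ 5 + 3125 * x ^ 10 by ring, hA']; ring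
  rw [neg_div', div_eq_div_iff hA5 hd]
  apply mul_right_cancel₀ (pow_ne_zero 30 hx)
  linear_combination (x ^ 5 * (x ^ 10 + 11 * x ^ 5 - 1) ^ 5) * h2 +
    (x ^ 20 - 228 * x ^ 15 + 494 * x ^ 10 + 228 * x ^ 5 + 1) ^ 3 * x ^ 5 * h25
end

section
/- Let L > 0, set M = (18 + L)/(64 + 3L), w^2 = L(18 + L)/(6(64 + 3L)), and let A be the positive real with A^6 = L/M = L(64 + 3L)/(18 + L). Then 4096 + 88A^6 + A^{12} is a perfect square of a rational function of L, and w^2 = (4096 - 20A^6 + A^{12} + (A^6 - 64)·√(4096 + 88A^6 + A^{12})) / (108·A^6). -/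
theorem stmt_15 (L A : ℝ) (hL : 0 < L) (hA : 0 < A)
    (hA6 : A ^ 6 = L * (64 + 3 * L) / (18 + L)) :
    4096 + 88 * A ^ 6 + A ^ 12 = (3 * (L ^ 2 + 36 * L + 384) / (18 + L)) ^ 2 ∧
    L * (18 + L) / (6 * (64 + 3 * L)) =
      (4096 - 20 * A ^ 6 + A ^ 12 +
        (A ^ 6 - 64) * Real.sqrt (4096 + 88 * A ^ 6 + A ^ 12)) / (108 * A ^ 6) := by
  have h18 : (18 : ℝ) + L > 0 := by linarith
  have h64 : (64 : ℝ) + 3 * L > 0 := by linarith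
  have hA12 : A ^ 12 = (L * (64 + 3 * L) / (18 + L)) ^ 2 := by
    rw [show (12:ℕ) = 6 * 2 by norm_num, pow_mul, hA6]
  have h1 : 4096 + 88 * A ^ 6 + A ^ 12 = (3 * (L ^ 2 + 36 * L + 384) / (18 + L)) ^ 2 := by
    rw [hA6, hA12]; field_simp; ring
  refine ⟨h1, ?_⟩
  have hs : Real.sqrt (4096 + 88 * A ^ 6 + A ^ 12) = 3 * (L ^ 2 + 36 * L + 384) / (18 + L) := by
    rw [h1, Real.sqrt_sq (by positivity)]
  rw [hs, hA6, hA12]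
  have hA6pos : (0:ℝ) < L * (64 + 3 * L) / (18 + L) := by positivity
  field_simp
  ring
end
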